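/- arXiv:1405.5396 — 2 statements merged into one kernel-verified Lean document; each statement's English description precedes it below -/
import Mathlib

section
/- With the q-Weyl dimension formula dim_q V_Λ = ∏_{α>0} [(Λ+ρ, α)]/[(ρ, α)] for A_ℓ, if Λ = (m+c_1)ω_1 + n_a ω_a + (m+c_2)ω_ℓ with c_1, c_2 ∈ ℕ fixed, n_a ∈ {0,1}, 2 ≤ a ≤ ℓ-1, then dim_q V_Λ ~ q^{-2ℓm} as m → ∞; i.e. q^{2ℓm}·dim_q V_Λ converges to a nonzero constant. -/
open Finset Filter RealInnerProductSpace

/-- The q-number `[x] = (q^{-x} - q^x)/(q^{-1} - q)`. -/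
noncomputable def qnum (q x : ℝ) : ℝ := (q ^ (-x) - q ^ x) / (q⁻¹ - q)

lemma qdim_inv_sub_pos (q : ℝ) (hq0 : 0 < q) (hq1 : q < 1) : 0 < q⁻¹ - q := by
  have h1 : 1 < q⁻¹ := (one_lt_inv₀ hq0).mpr hq1
  linarith

lemma qnum_pos (q x : ℝ) (hq0 : 0 < q) (hq1 : q < 1) (hx : 0 < x) : 0 < qnum q x := by
  unfold qnum
  apply div_pos _ (qdim_inv_sub_pos q hq0 hq1)
  have : q ^ x < q ^ (-x) := Real.rpow_lt_rpow_of_exponent_gt hq0 hq1 (by linarith)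
  linarith

/-- The coefficient of `m` in the exponent. -/
def Dfun (ℓ i j : ℕ) : ℕ := (if i = 1 then 1 else 0) + (if j = ℓ + 1 then 1 else 0)

/-- The constant part of the exponent. -/
noncomputable def Efun (ℓ a c₁ c₂ : ℕ) (nₐ : ℝ) (i j : ℕ) : ℝ :=
  ((j - i : ℕ) : ℝ) + (if i = 1 then (c₁ : ℝ) else 0)
    + (if a ∈ Finset.Ico i j then nₐ else 0) + (if j = ℓ + 1 then (c₂ : ℝ) else 0)

lemma qdim_tendsto_main (q e : ℝ) (hq0 : 0 < q) (hq1 : q < 1) (d : ℕ) :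
    Tendsto (fun m : ℕ => q ^ (d * m) * qnum q (e + d * m)) atTop
      (nhds (if d = 0 then qnum q e else q ^ (-e) / (q⁻¹ - q))) := by
  rcases Nat.eq_zero_or_pos d with hd | hd
  · subst hd
    simp
  · rw [if_neg hd.ne']
    have heq : ∀ m : ℕ, q ^ (d * m) * qnum q (e + d * m)
        = (q ^ (-e) - q ^ (e + 2 * d * m)) / (q⁻¹ - q) := by
      intro m
      unfold qnum
      rw [← mul_div_assoc]
      congr 1
      have hq : q ^ (d * m) = q ^ ((d * m : ℕ) : ℝ) := (Real.rpow_natCast q _).symm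
      have h1 : ((d * m : ℕ) : ℝ) + (-(e + d * m)) = -e := by push_cast; ring
      have h2 : ((d * m : ℕ) : ℝ) + (e + d * m) = e + 2 * d * m := by push_cast; ring
      rw [hq, mul_sub, ← Real.rpow_add hq0, ← Real.rpow_add hq0, h1, h2]
    have h0 : Tendsto (fun m : ℕ => q ^ (e + 2 * (d : ℝ) * m)) atTop (nhds 0) := by
      apply (tendsto_rpow_atTop_of_base_lt_one q (by linarith) hq1).comp
      apply tendsto_atTop_add_const_left
      exact (tendsto_natCast_atTop_atTop (R := ℝ)).const_mul_atTop (by positivity)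
    have := ((tendsto_const_nhds (x := q ^ (-e))).sub h0).div_const (q⁻¹ - q)
    simp only [sub_zero] at this
    exact this.congr fun m => (heq m).symm

/-- q-Weyl dimension formula asymptotics for `A_ℓ`: if
`Λ_m = (m+c_1)ω_1 + n_a ω_a + (m+c_2)ω_ℓ` with `n_a ∈ {0,1}`, `2 ≤ a ≤ ℓ-1`, then
`dim_q V_{Λ_m} = ∏_{1≤i<j≤ℓ+1} [(Λ_m+ρ, α_{ij})]/[(ρ, α_{ij})] ~ q^{-2ℓm}` as
`m → ∞`, i.e. `q^{2ℓm}·dim_q V_{Λ_m}` converges to a nonzero (positive) constant. -/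
theorem quantum_dimension_asymptotic {V : Type*} [NormedAddCommGroup V]
    [InnerProductSpace ℝ V] (q : ℝ) (hq0 : 0 < q) (hq1 : q < 1)
    (ℓ : ℕ) (hℓ : 3 ≤ ℓ) (α ω : ℕ → V)
    (hdual : ∀ i ∈ Icc 1 ℓ, ∀ j ∈ Icc 1 ℓ, ⟪α i, ω j⟫ = if i = j then 1 else 0)
    (ρ : V) (hρ : ρ = ∑ j ∈ Icc 1 ℓ, ω j)
    (a : ℕ) (ha2 : 2 ≤ a) (haℓ : a ≤ ℓ - 1)
    (c₁ c₂ : ℕ) (nₐ : ℝ) (hnₐ : nₐ = 0 ∨ nₐ = 1)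
    (Λ : ℕ → V)
    (hΛ : ∀ m : ℕ, Λ m = ((m : ℝ) + c₁) • ω 1 + nₐ • ω a + ((m : ℝ) + c₂) • ω ℓ)
    (dimq : ℕ → ℝ)
    (hdimq : ∀ m : ℕ, dimq m = ∏ i ∈ Icc 1 ℓ, ∏ j ∈ Icc (i + 1) (ℓ + 1),
      qnum q ⟪Λ m + ρ, ∑ k ∈ Ico i j, α k⟫ / qnum q ⟪ρ, ∑ k ∈ Ico i j, α k⟫) :
    ∃ C : ℝ, 0 < C ∧
      Tendsto (fun m : ℕ => q ^ (2 * ℓ * m) * dimq m) atTop (nhds C) := by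
  have hinv : 0 < q⁻¹ - q := qdim_inv_sub_pos q hq0 hq1
  have hnn : 0 ≤ nₐ := by rcases hnₐ with h | h <;> simp [h]
  have h1mem : (1 : ℕ) ∈ Icc 1 ℓ := by simp [mem_Icc]; omega
  have hamem : a ∈ Icc 1 ℓ := by simp [mem_Icc]; omega
  have hlmem : ℓ ∈ Icc 1 ℓ := by simp [mem_Icc]; omega
  -- inner products of fundamental weights with root sums
  have hωsum : ∀ t ∈ Icc 1 ℓ, ∀ i j : ℕ, 1 ≤ i → j ≤ ℓ + 1 →
      ⟪ω t, ∑ k ∈ Ico i j, α k⟫ = if t ∈ Ico i j then (1 : ℝ) else 0 := by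
    intro t ht i j hi hj
    rw [inner_sum]
    rw [Finset.sum_congr rfl (fun k hk => ?_)]
    · exact Finset.sum_ite_eq' (Ico i j) t (fun _ => (1 : ℝ))
    · rw [mem_Ico] at hk
      rw [real_inner_comm, hdual k (by rw [mem_Icc]; omega) t ht]
  have hρip : ∀ i j : ℕ, 1 ≤ i → i < j → j ≤ ℓ + 1 →
      ⟪ρ, ∑ k ∈ Ico i j, α k⟫ = ((j - i : ℕ) : ℝ) := by
    intro i j h1 h2 h3
    rw [hρ, sum_inner, Finset.sum_congr rfl (fun t ht => hωsum t ht i j h1 h3),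
      Finset.sum_ite_mem]
    have hsub : Icc 1 ℓ ∩ Ico i j = Ico i j := by
      apply Finset.inter_eq_right.mpr
      intro k hk
      rw [mem_Ico] at hk
      rw [mem_Icc]
      omega
    rw [hsub]
    simp [Nat.card_Ico]
  have hΛip : ∀ (m : ℕ) (i j : ℕ), 1 ≤ i → i < j → j ≤ ℓ + 1 →
      ⟪Λ m + ρ, ∑ k ∈ Ico i j, α k⟫
        = Efun ℓ a c₁ c₂ nₐ i j + (Dfun ℓ i j : ℝ) * m := by
    intro m i j h1 h2 h3
    have hi1 : 1 ∈ Ico i j ↔ i = 1 := by rw [mem_Ico]; omega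
    have hjl : ℓ ∈ Ico i j ↔ j = ℓ + 1 := by rw [mem_Ico]; omega
    rw [inner_add_left, hρip i j h1 h2 h3, hΛ m, inner_add_left, inner_add_left,
      real_inner_smul_left, real_inner_smul_left, real_inner_smul_left,
      hωsum 1 h1mem i j h1 h3, hωsum a hamem i j h1 h3, hωsum ℓ hlmem i j h1 h3]
    simp only [hi1, hjl, Efun, Dfun]
    split_ifs <;> push_cast <;> ring
  -- rewrite dimq
  have hdimq' : ∀ m : ℕ, dimq m = ∏ i ∈ Icc 1 ℓ, ∏ j ∈ Icc (i + 1) (ℓ + 1),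
      qnum q (Efun ℓ a c₁ c₂ nₐ i j + (Dfun ℓ i j : ℝ) * m) / qnum q ((j - i : ℕ)) := by
    intro m
    rw [hdimq m]
    refine Finset.prod_congr rfl fun i hi => Finset.prod_congr rfl fun j hj => ?_
    rw [mem_Icc] at hi hj
    rw [hΛip m i j hi.1 (by omega) hj.2, hρip i j hi.1 (by omega) hj.2]
  -- the total degree is 2ℓ
  have hsum : ∑ i ∈ Icc 1 ℓ, ∑ j ∈ Icc (i + 1) (ℓ + 1), Dfun ℓ i j = 2 * ℓ := by
    have hinner : ∀ i ∈ Icc 1 ℓ, ∑ j ∈ Icc (i + 1) (ℓ + 1), Dfun ℓ i j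
        = (if i = 1 then ℓ else 0) + 1 := by
      intro i hi
      rw [mem_Icc] at hi
      simp only [Dfun]
      have hmem : ℓ + 1 ∈ Icc (i + 1) (ℓ + 1) := by rw [mem_Icc]; omega
      rw [Finset.sum_add_distrib, Finset.sum_const,
        Finset.sum_ite_eq' (Icc (i + 1) (ℓ + 1)) (ℓ + 1) (fun _ => 1),
        if_pos hmem, Nat.card_Icc, smul_eq_mul]
      split_ifs <;> omega
    rw [Finset.sum_congr rfl hinner, Finset.sum_add_distrib, Finset.sum_const,
      Finset.sum_ite_eq' (Icc 1 ℓ) 1 (fun _ => ℓ), if_pos h1mem, Nat.card_Icc,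
      smul_eq_mul]
    omega
  -- positivity facts
  have hEpos : ∀ i j : ℕ, i < j → 0 < Efun ℓ a c₁ c₂ nₐ i j := by
    intro i j hij
    have h1 : (1 : ℝ) ≤ ((j - i : ℕ) : ℝ) := by
      have : 1 ≤ j - i := by omega
      exact_mod_cast this
    simp only [Efun]
    have hc1 : (0:ℝ) ≤ c₁ := Nat.cast_nonneg _
    have hc2 : (0:ℝ) ≤ c₂ := Nat.cast_nonneg _
    split_ifs <;> linarith
  have hden : ∀ i j : ℕ, i < j → 0 < qnum q ((j - i : ℕ)) := by
    intro i j hij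
    apply qnum_pos q _ hq0 hq1
    have : 1 ≤ j - i := by omega
    exact_mod_cast Nat.lt_of_lt_of_le Nat.zero_lt_one this
  -- the limit constant for each factor
  set L : ℕ → ℕ → ℝ := fun i j =>
    (if Dfun ℓ i j = 0 then qnum q (Efun ℓ a c₁ c₂ nₐ i j)
      else q ^ (-(Efun ℓ a c₁ c₂ nₐ i j)) / (q⁻¹ - q)) / qnum q ((j - i : ℕ)) with hL
  refine ⟨∏ i ∈ Icc 1 ℓ, ∏ j ∈ Icc (i + 1) (ℓ + 1), L i j, ?_, ?_⟩
  · apply Finset.prod_pos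
    intro i hi
    apply Finset.prod_pos
    intro j hj
    rw [mem_Icc] at hi hj
    have hij : i < j := by omega
    apply div_pos _ (hden i j hij)
    split_ifs
    · exact qnum_pos q _ hq0 hq1 (hEpos i j hij)
    · exact div_pos (Real.rpow_pos_of_pos hq0 _) hinv
  · have hT : Tendsto (fun m : ℕ => ∏ i ∈ Icc 1 ℓ, ∏ j ∈ Icc (i + 1) (ℓ + 1),
        q ^ (Dfun ℓ i j * m) *
          (qnum q (Efun ℓ a c₁ c₂ nₐ i j + (Dfun ℓ i j : ℝ) * m) / qnum q ((j - i : ℕ))))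
        atTop (nhds (∏ i ∈ Icc 1 ℓ, ∏ j ∈ Icc (i + 1) (ℓ + 1), L i j)) := by
      apply tendsto_finset_prod
      intro i _
      apply tendsto_finset_prod
      intro j _
      have h := (qdim_tendsto_main q (Efun ℓ a c₁ c₂ nₐ i j) hq0 hq1
        (Dfun ℓ i j)).div_const (qnum q ((j - i : ℕ)))
      rw [hL]
      simp only [mul_div_assoc] at h ⊢
      exact h
    refine hT.congr fun m => ?_
    rw [hdimq' m]
    rw [Finset.prod_congr rfl (fun i _ => Finset.prod_mul_distrib),
      Finset.prod_mul_distrib]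
    congr 1
    rw [Finset.prod_congr rfl (fun i _ =>
        Finset.prod_pow_eq_pow_sum (Icc (i + 1) (ℓ + 1)) (fun j => Dfun ℓ i j * m) q),
      Finset.prod_pow_eq_pow_sum]
    congr 1
    calc ∑ i ∈ Icc 1 ℓ, ∑ j ∈ Icc (i + 1) (ℓ + 1), Dfun ℓ i j * m
        = ∑ i ∈ Icc 1 ℓ, (∑ j ∈ Icc (i + 1) (ℓ + 1), Dfun ℓ i j) * m := by
          refine Finset.sum_congr rfl fun i _ => ?_
          rw [Finset.sum_mul]
      _ = (∑ i ∈ Icc 1 ℓ, ∑ j ∈ Icc (i + 1) (ℓ + 1), Dfun ℓ i j) * m := by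
          rw [Finset.sum_mul]
      _ = 2 * ℓ * m := by rw [hsum]
end

section
/- Suppose (λ_m)_{m≥1} and (d_m)_{m≥1} are positive sequences with λ_m q^m → L > 0 and d_m q^{2ℓm} → M > 0 as m → ∞ (0 < q < 1, ℓ ≥ 1). Then the 'zeta function' Z(s) = ∑_{m≥1} d_m (λ_m² + 1)^{-s/2} converges for s > 2ℓ, diverges for 0 < s < 2ℓ, and the one-sided limit lim_{s→(2ℓ)^+} (s - 2ℓ) Z(s) exists and equals M·L^{-2ℓ}/log(q^{-1}). -/
/-!
With `a_m = d_m q^{2ℓm} → M` and `b_m = (λ_m² + 1) q^{2m} → L²`, the `m`-th term of `Z(s)` is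
`a_m b_m^{-s/2} r^m` with `r = q^{s-2ℓ}`: a power series in `r` with convergent coefficients, so it
converges for `r < 1` and diverges for `r > 1`. For the residue put `t = s - 2ℓ`. Since `log b_m`
is bounded, `b_m^{-t/2} → 1` uniformly in `m`, so up to an error that vanishes with `t` the value
`t Z(s)` equals `t / (1 - q^t)` times `(1 - x) ∑ c_m x^m` with `x = q^t` and
`c_m = a_m b_m^{-ℓ} → M L^{-2ℓ}`. The first factor tends to `1 / log q⁻¹`, and by Abel's limit
theorem, applied to the successive differences of `c`, the second tends to `M L^{-2ℓ}`.
-/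

open Filter Topology

theorem summable_mul_pow_of_tendsto {u : ℕ → ℝ} {c r : ℝ} (hu : Tendsto u atTop (𝓝 c))
    (hr0 : 0 ≤ r) (hr1 : r < 1) : Summable fun m ↦ u m * r ^ m :=
  summable_of_isBigO_nat (summable_geometric_of_lt_one hr0 hr1)
    (by simpa using hu.isBigO_one ℝ |>.mul (Asymptotics.isBigO_refl (fun m : ℕ ↦ r ^ m) atTop))

theorem not_summable_mul_pow_of_tendsto {u : ℕ → ℝ} {c r : ℝ} (hu : Tendsto u atTop (𝓝 c))
    (hc : c ≠ 0) (hr : 1 ≤ r) : ¬Summable fun m ↦ u m * r ^ m := by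
  intro hsum
  refine hc (tendsto_nhds_unique hu (squeeze_zero_norm (fun m ↦ ?_)
    (tendsto_zero_iff_norm_tendsto_zero.mp hsum.tendsto_atTop_zero)))
  rw [norm_mul, norm_pow]
  exact le_mul_of_one_le_right (norm_nonneg _) (one_le_pow₀ (hr.trans (Real.le_norm_self r)))

theorem tendsto_one_sub_mul_tsum_mul_pow {f : ℕ → ℝ} {C : ℝ} (hf : Tendsto f atTop (𝓝 C)) :
    Tendsto (fun x ↦ (1 - x) * ∑' n, f n * x ^ n) (𝓝[<] 1) (𝓝 C) := by
  set g : ℕ → ℝ := fun n ↦ f n - if n = 0 then 0 else f (n - 1)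
  have hg : ∀ n, ∑ i ∈ Finset.range (n + 1), g i = f n := by
    intro n
    induction n with
    | zero => simp [g]
    | succ n ih => rw [Finset.sum_range_succ, ih]; simp [g]
  have habel := Real.tendsto_tsum_powerSeries_nhdsWithin_lt
    ((tendsto_add_atTop_iff_nat (f := fun n ↦ ∑ i ∈ Finset.range n, g i) 1).mp
      (by simpa only [hg] using hf))
  refine habel.congr' ?_
  filter_upwards [Ioo_mem_nhdsLT zero_lt_one] with x ⟨hx0, hx1⟩
  have hF := (summable_mul_pow_of_tendsto hf hx0.le hx1).hasSum
  have hshifted : HasSum (fun n ↦ if n = 0 then 0 else f (n - 1) * x ^ (n - 1))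
      (∑' n, f n * x ^ n) := by
    rw [← hasSum_nat_add_iff' 1]
    simpa using hF
  have hterm : (fun n ↦ g n * x ^ n) =
      fun n ↦ f n * x ^ n - x * if n = 0 then 0 else f (n - 1) * x ^ (n - 1) := by
    funext n
    cases n with
    | zero => simp [g]
    | succ n =>
      simp only [Nat.add_eq_zero_iff, one_ne_zero, and_false, ↓reduceIte, add_tsub_cancel_right,
        pow_succ, g]
      ring
  rw [hterm, (hF.sub (hshifted.mul_left x)).tsum_eq]
  ring

theorem tendsto_div_one_sub_rpow {q : ℝ} (hq0 : 0 < q) (hq1 : q < 1) :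
    Tendsto (fun t ↦ t / (1 - q ^ t)) (𝓝[>] 0) (𝓝 (Real.log q⁻¹)⁻¹) := by
  have hslope := ((Real.hasStrictDerivAt_const_rpow hq0 0).hasDerivAt).tendsto_slope_zero_right
  have hlog : -Real.log q ≠ 0 := neg_ne_zero.mpr (Real.log_neg hq0 hq1).ne
  refine (hslope.neg.inv₀ (by simpa using hlog)).congr' ?_ |>.trans ?_
  · filter_upwards with t
    simp only [div_eq_mul_inv, smul_eq_mul, zero_add, Real.rpow_zero]
    rw [← neg_sub 1 (q ^ t), mul_neg, neg_neg, mul_inv, inv_inv]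
  · simp [Real.log_inv]

theorem tendsto_rpow_nhdsGT_zero_nhdsLT_one {q : ℝ} (hq0 : 0 < q) (hq1 : q < 1) :
    Tendsto (fun t : ℝ ↦ q ^ t) (𝓝[>] 0) (𝓝[<] 1) := by
  refine tendsto_nhdsWithin_of_tendsto_nhds_of_eventually_within _ ?_ ?_
  · simpa using ((Real.continuous_const_rpow hq0.ne').tendsto 0).mono_left nhdsWithin_le_nhds
  · filter_upwards [self_mem_nhdsWithin] with t (ht : 0 < t)
    exact Real.rpow_lt_one hq0.le hq1 ht

theorem tendsto_mul_tsum_mul_rpow_pow {q : ℝ} (hq0 : 0 < q) (hq1 : q < 1) {f : ℕ → ℝ} {C : ℝ}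
    (hf : Tendsto f atTop (𝓝 C)) :
    Tendsto (fun t ↦ t * ∑' n, f n * (q ^ t) ^ n) (𝓝[>] 0) (𝓝 (C / Real.log q⁻¹)) := by
  have h := (tendsto_div_one_sub_rpow hq0 hq1).mul
    ((tendsto_one_sub_mul_tsum_mul_pow hf).comp (tendsto_rpow_nhdsGT_zero_nhdsLT_one hq0 hq1))
  rw [inv_mul_eq_div] at h
  refine h.congr' ?_
  filter_upwards [self_mem_nhdsWithin] with t (ht : 0 < t)
  have : 1 - q ^ t ≠ 0 := sub_ne_zero.mpr (Real.rpow_lt_one hq0.le hq1 ht).ne'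
  simp only [Function.comp_apply]
  field_simp

theorem abs_rpow_sub_one_le {b K : ℝ} (hb : 0 < b) (hK : |Real.log b| ≤ K) (t : ℝ) :
    |b ^ t - 1| ≤ Real.exp (K * |t|) - Real.exp (-(K * |t|)) := by
  have hy : |Real.log b * t| ≤ K * |t| := by
    rw [abs_mul]; exact mul_le_mul_of_nonneg_right hK (abs_nonneg t)
  have hlow := Real.exp_le_exp.mpr (neg_le_of_abs_le hy)
  have hup := Real.exp_le_exp.mpr (le_of_abs_le hy)
  have hKt : 0 ≤ K * |t| := (abs_nonneg _).trans hy
  have hone := Real.one_le_exp hKt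
  have hone' := Real.exp_le_one_iff.mpr (neg_nonpos.mpr hKt)
  rw [Real.rpow_def_of_pos hb, abs_sub_le_iff]
  constructor <;> linarith

theorem tendsto_mul_tsum_mul_mul_rpow_pow {q : ℝ} (hq0 : 0 < q) (hq1 : q < 1) {f : ℕ → ℝ}
    {C : ℝ} (hf : Tendsto f atTop (𝓝 C)) {e : ℝ → ℕ → ℝ} {δ : ℝ → ℝ}
    (hδ : Tendsto δ (𝓝[>] 0) (𝓝 0)) (he : ∀ t > 0, ∀ n, |e t n - 1| ≤ δ t) :
    Tendsto (fun t ↦ t * ∑' n, f n * e t n * (q ^ t) ^ n) (𝓝[>] 0) (𝓝 (C / Real.log q⁻¹)) := by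
  have hgeom : ∀ t : ℝ, 0 < t → 0 ≤ q ^ t ∧ q ^ t < 1 := fun t ht ↦
    ⟨Real.rpow_nonneg hq0.le t, Real.rpow_lt_one hq0.le hq1 ht⟩
  have hterm : ∀ t : ℝ, 0 < t → ∀ n,
      ‖f n * (e t n - 1) * (q ^ t) ^ n‖ ≤ δ t * (|f n| * (q ^ t) ^ n) := by
    intro t ht n
    have hx : 0 ≤ (q ^ t) ^ n := pow_nonneg (hgeom t ht).1 n
    calc ‖f n * (e t n - 1) * (q ^ t) ^ n‖ = |e t n - 1| * (|f n| * (q ^ t) ^ n) := by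
          rw [norm_mul, norm_mul, Real.norm_eq_abs, Real.norm_eq_abs, Real.norm_of_nonneg hx]
          ring
      _ ≤ δ t * (|f n| * (q ^ t) ^ n) := by
          gcongr
          exact he t ht n
  have herr : Tendsto (fun t ↦ t * ∑' n, f n * (e t n - 1) * (q ^ t) ^ n) (𝓝[>] 0) (𝓝 0) := by
    have hbound := hδ.mul (tendsto_mul_tsum_mul_rpow_pow hq0 hq1 hf.abs)
    rw [zero_mul] at hbound
    refine squeeze_zero_norm' ?_ hbound
    filter_upwards [self_mem_nhdsWithin] with t (ht : 0 < t)
    have hsum := (summable_mul_pow_of_tendsto hf.abs (hgeom t ht).1 (hgeom t ht).2).hasSum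
    rw [norm_mul, Real.norm_of_nonneg ht.le, mul_left_comm]
    exact mul_le_mul_of_nonneg_left
      (tsum_of_norm_bounded (hsum.mul_left (δ t)) (hterm t ht)) ht.le
  have hsplit := (tendsto_mul_tsum_mul_rpow_pow hq0 hq1 hf).add herr
  rw [add_zero] at hsplit
  refine hsplit.congr' ?_
  filter_upwards [self_mem_nhdsWithin] with t (ht : 0 < t)
  have hs := summable_mul_pow_of_tendsto hf (hgeom t ht).1 (hgeom t ht).2
  have hs' : Summable fun n ↦ f n * (e t n - 1) * (q ^ t) ^ n :=
    .of_norm_bounded ((summable_mul_pow_of_tendsto hf.abs (hgeom t ht).1 (hgeom t ht).2).mul_left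
      (δ t)) (hterm t ht)
  rw [← mul_add, ← hs.tsum_add hs']
  congr 1
  exact tsum_congr fun n ↦ by ring

theorem tendsto_sub_mul_tsum_mul_rpow_mul_pow {q : ℝ} (hq0 : 0 < q) (hq1 : q < 1) (σ : ℝ)
    {a b : ℕ → ℝ} {A B : ℝ} (ha : Tendsto a atTop (𝓝 A)) (hb_pos : ∀ n, 0 < b n)
    (hb : Tendsto b atTop (𝓝 B)) (hB : 0 < B) :
    Tendsto (fun s ↦ (s - σ) * ∑' n, a n * b n ^ (-s / 2) * (q ^ (s - σ)) ^ n) (𝓝[>] σ)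
      (𝓝 (A * B ^ (-σ / 2) / Real.log q⁻¹)) := by
  obtain ⟨K, hK⟩ : ∃ K, ∀ n, |Real.log (b n)| ≤ K := by
    obtain ⟨K, hK⟩ := isBounded_iff_forall_norm_le.mp
      (Metric.isBounded_range_of_tendsto _ ((Real.continuousAt_log hB.ne').tendsto.comp hb))
    exact ⟨K, fun n ↦ hK _ ⟨n, rfl⟩⟩
  have hδ : Tendsto (fun t : ℝ ↦ Real.exp (K * |-t / 2|) - Real.exp (-(K * |-t / 2|)))
      (𝓝[>] 0) (𝓝 0) := by
    have hcont : Continuous fun t : ℝ ↦ Real.exp (K * |-t / 2|) - Real.exp (-(K * |-t / 2|)) := by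
      fun_prop
    simpa using (hcont.tendsto 0).mono_left nhdsWithin_le_nhds
  have hlim := tendsto_mul_tsum_mul_mul_rpow_pow hq0 hq1
    (ha.mul (hb.rpow_const (p := -σ / 2) (Or.inl hB.ne'))) (e := fun t n ↦ b n ^ (-t / 2)) hδ
    fun t _ n ↦ abs_rpow_sub_one_le (hb_pos n) (hK n) _
  have hshift : Tendsto (fun s ↦ s - σ) (𝓝[>] σ) (𝓝[>] 0) := by
    have := Filter.map_subRight_nhdsGT (c := σ) (a := σ)
    rw [sub_self] at this
    exact this.le
  refine (hlim.comp hshift).congr fun s ↦ ?_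
  simp only [Function.comp_apply]
  congr 1
  refine tsum_congr fun n ↦ ?_
  rw [mul_assoc (a n), ← Real.rpow_add (hb_pos n)]
  ring_nf

theorem mul_rpow_neg_half_eq {q : ℝ} (hq0 : 0 < q) (ℓ m : ℕ) (c : ℝ) {x : ℝ} (hx : 0 ≤ x)
    (s : ℝ) :
    c * x ^ (-s / 2) =
      c * q ^ (2 * ℓ * m) * (x * q ^ (2 * m)) ^ (-s / 2) * (q ^ (s - 2 * ℓ)) ^ m := by
  have hcancel : q ^ ((2 * ℓ * m : ℕ) : ℝ) * q ^ ((2 * m : ℕ) * (-s / 2)) *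
      q ^ ((s - 2 * ℓ) * m) = 1 := by
    rw [← Real.rpow_add hq0, ← Real.rpow_add hq0, ← Real.rpow_zero q]
    push_cast
    ring_nf
  rw [Real.mul_rpow hx (by positivity), ← Real.rpow_natCast q (2 * m), ← Real.rpow_mul hq0.le,
    ← Real.rpow_mul_natCast hq0.le, ← Real.rpow_natCast q (2 * ℓ * m)]
  linear_combination -(c * x ^ (-s / 2)) * hcancel

theorem tendsto_sq_add_one_mul_pow_two_mul {q L : ℝ} (hq0 : 0 ≤ q) (hq1 : q < 1) {lam : ℕ → ℝ}
    (hlam : Tendsto (fun m ↦ lam m * q ^ m) atTop (𝓝 L)) :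
    Tendsto (fun m ↦ (lam m ^ 2 + 1) * q ^ (2 * m)) atTop (𝓝 (L ^ 2)) := by
  have h := (hlam.pow 2).add ((tendsto_pow_atTop_nhds_zero_of_lt_one hq0 hq1).pow 2)
  rw [zero_pow two_ne_zero, add_zero] at h
  exact h.congr fun m ↦ by ring

theorem spectral_dimension_two_ell_general (q : ℝ) (hq0 : 0 < q) (hq1 : q < 1)
    (ℓ : ℕ) (lam d : ℕ → ℝ)
    (L M : ℝ) (hL : 0 < L) (hM : 0 < M)
    (hlam : Tendsto (fun m : ℕ => lam m * q ^ m) atTop (nhds L))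
    (hd : Tendsto (fun m : ℕ => d m * q ^ (2 * ℓ * m)) atTop (nhds M)) :
    (∀ s : ℝ, 2 * ℓ < s → Summable fun m : ℕ => d m * (lam m ^ 2 + 1) ^ (-s / 2)) ∧
    (∀ s : ℝ, 0 < s → s < 2 * ℓ →
      ¬ Summable fun m : ℕ => d m * (lam m ^ 2 + 1) ^ (-s / 2)) ∧
    Tendsto
      (fun s : ℝ => (s - 2 * ℓ) * ∑' m : ℕ, d m * (lam m ^ 2 + 1) ^ (-s / 2))
      (nhdsWithin (2 * ℓ) (Set.Ioi (2 * ℓ)))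
      (nhds (M / L ^ (2 * ℓ) / Real.log q⁻¹)) := by
  have hb := tendsto_sq_add_one_mul_pow_two_mul hq0.le hq1 hlam
  have hL2 : 0 < L ^ 2 := by positivity
  have hfactor (s : ℝ) : (fun m ↦ d m * (lam m ^ 2 + 1) ^ (-s / 2)) = fun m ↦
      d m * q ^ (2 * ℓ * m) * ((lam m ^ 2 + 1) * q ^ (2 * m)) ^ (-s / 2) * (q ^ (s - 2 * ℓ)) ^ m :=
    funext fun m ↦ mul_rpow_neg_half_eq hq0 ℓ m _ (by positivity) s
  have hcoeff (s : ℝ) : Tendsto (fun m ↦ d m * q ^ (2 * ℓ * m) *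
      ((lam m ^ 2 + 1) * q ^ (2 * m)) ^ (-s / 2)) atTop (𝓝 (M * (L ^ 2) ^ (-s / 2))) :=
    hd.mul (hb.rpow_const (Or.inl hL2.ne'))
  refine ⟨fun s hs ↦ ?_, fun s _ hs ↦ ?_, ?_⟩
  · rw [hfactor]
    exact summable_mul_pow_of_tendsto (hcoeff s) (Real.rpow_nonneg hq0.le _)
      (Real.rpow_lt_one hq0.le hq1 (by linarith))
  · rw [hfactor]
    exact not_summable_mul_pow_of_tendsto (hcoeff s) (by positivity)
      (Real.one_le_rpow_of_pos_of_le_one_of_nonpos hq0 hq1.le (by linarith))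
  · have hresidue : M * (L ^ 2) ^ (-(2 * ℓ : ℝ) / 2) = M / L ^ (2 * ℓ) := by
      rw [neg_div, mul_div_cancel_left₀ _ two_ne_zero, Real.rpow_neg hL2.le, Real.rpow_natCast,
        ← pow_mul, div_eq_mul_inv]
    rw [← hresidue]
    exact (tendsto_sub_mul_tsum_mul_rpow_mul_pow hq0 hq1 (2 * ℓ) hd (fun m ↦ by positivity) hb
      hL2).congr fun s ↦ by rw [hfactor]

/-- Spectral dimension with residue: if `λ_m q^m → L > 0` and `d_m q^{2ℓm} → M > 0`
(`0 < q < 1`, `ℓ ≥ 1`, positive sequences), then `Z(s) = ∑_m d_m (λ_m² + 1)^{-s/2}`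
converges for `s > 2ℓ`, diverges for `0 < s < 2ℓ`, and
`lim_{s→(2ℓ)^+} (s - 2ℓ) Z(s) = M·L^{-2ℓ}/log(q⁻¹)`. -/
theorem spectral_dimension_two_ell (q : ℝ) (hq0 : 0 < q) (hq1 : q < 1)
    (ℓ : ℕ) (hℓ : 0 < ℓ) (lam d : ℕ → ℝ)
    (hlam_pos : ∀ m, 0 < lam m) (hd_pos : ∀ m, 0 < d m)
    (L M : ℝ) (hL : 0 < L) (hM : 0 < M)
    (hlam : Tendsto (fun m : ℕ => lam m * q ^ m) atTop (nhds L))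
    (hd : Tendsto (fun m : ℕ => d m * q ^ (2 * ℓ * m)) atTop (nhds M)) :
    (∀ s : ℝ, 2 * ℓ < s → Summable fun m : ℕ => d m * (lam m ^ 2 + 1) ^ (-s / 2)) ∧
    (∀ s : ℝ, 0 < s → s < 2 * ℓ →
      ¬ Summable fun m : ℕ => d m * (lam m ^ 2 + 1) ^ (-s / 2)) ∧
    Tendsto
      (fun s : ℝ => (s - 2 * ℓ) * ∑' m : ℕ, d m * (lam m ^ 2 + 1) ^ (-s / 2))
      (nhdsWithin (2 * ℓ) (Set.Ioi (2 * ℓ)))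
      (nhds (M / L ^ (2 * ℓ) / Real.log q⁻¹)) :=
  spectral_dimension_two_ell_general q hq0 hq1 ℓ lam d L M hL hM hlam hd
end
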